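/- arXiv:1011.3320 — 6 statements merged into one kernel-verified Lean document; each statement's English description precedes it below -/
import Mathlib

section
/- Let X be a nonnegative random variable with survival function 1-F(x)=exp(-H(x)) where H(x)=x^α+h(x), α>0, and h(x)/x^α→0 and h'(x)/x^{α-1}→0 as x→∞. Let Z(a) have the distribution of X-a conditional on X>a. Then E[Z(a)] / (a^{1-α}/α) → 1 as a→∞. -/
open Real Filter MeasureTheory

lemma aux_rpow_exp (α s : ℝ) (hα : 0 < α) :
    Tendsto (fun x : ℝ => x ^ s * Real.exp (-(1/2) * x ^ α)) atTop (nhds 0) := by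
  have h1 := tendsto_rpow_mul_exp_neg_mul_atTop_nhds_zero (s/α) (1/2) (by norm_num)
  have h2 : Tendsto (fun x : ℝ => x ^ α) atTop atTop := tendsto_rpow_atTop hα
  refine (h1.comp h2).congr' ?_
  filter_upwards [eventually_ge_atTop (0:ℝ)] with x hx0
  simp only [Function.comp]
  rw [← Real.rpow_mul hx0]
  congr 2
  field_simp

/-- For a nonnegative random variable with survival function
`exp (-(x^α + h x))` with `h x = o(x^α)` and `h' x = o(x^(α-1))`, the expected
overshoot `E[Z(a)] = (∫_a^∞ exp (-H x) dx) / exp (-H a)` satisfies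
`E[Z(a)] / (a^(1-α)/α) → 1` as `a → ∞`. -/
theorem stmt0 (α : ℝ) (hα : 0 < α) (h h' : ℝ → ℝ)
    (hd : ∀ x, HasDerivAt h (h' x) x)
    (h1 : Tendsto (fun x => h x / x ^ α) atTop (nhds 0))
    (h2 : Tendsto (fun x => h' x / x ^ (α - 1)) atTop (nhds 0)) :
    Tendsto (fun a =>
        ((∫ x in Set.Ioi a, Real.exp (-(x ^ α + h x))) / Real.exp (-(a ^ α + h a)))
          / (a ^ (1 - α) / α)) atTop (nhds 1) := by
  set G : ℝ → ℝ := fun x => Real.exp (-(x ^ α + h x)) with hG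
  have hh_cont : Continuous h := by
    have : Differentiable ℝ h := fun x => (hd x).differentiableAt
    exact this.continuous
  have hrpow_cont : Continuous (fun x : ℝ => x ^ α) := by
    apply continuous_iff_continuousAt.mpr
    intro x
    exact Real.continuousAt_rpow_const x α (Or.inr hα.le)
  have hG_cont : Continuous G := by
    exact (((hrpow_cont.add hh_cont).neg).rexp)
  -- half bound: eventually h x ≥ -(1/2) x^α
  have hhalf : ∀ᶠ x in atTop, G x ≤ Real.exp (-(1/2) * x ^ α) := by
    have hev : ∀ᶠ x in atTop, |h x| / |x ^ α| < 1/2 := by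
      have := Metric.tendsto_nhds.mp h1 (1/2) (by norm_num)
      filter_upwards [this] with x hx
      simpa [Real.dist_eq, abs_div] using hx
    filter_upwards [hev, eventually_ge_atTop (1:ℝ)] with x hx hx1
    have hxpos : (0:ℝ) < x := lt_of_lt_of_le one_pos hx1
    have hxa : (0:ℝ) < x ^ α := Real.rpow_pos_of_pos hxpos α
    rw [abs_of_pos hxa] at hx
    rw [div_lt_iff₀ hxa] at hx
    apply Real.exp_le_exp.mpr
    nlinarith [neg_abs_le (h x), le_abs_self (h x)]
  -- bound by x^(-2)
  have hbound : ∀ᶠ x in atTop, G x ≤ x ^ (-2 : ℝ) := by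
    have haux := aux_rpow_exp α 2 hα
    have h1' : ∀ᶠ x in atTop, x ^ (2:ℝ) * Real.exp (-(1/2) * x ^ α) ≤ 1 := by
      filter_upwards [haux.eventually (ge_mem_nhds (by norm_num : (0:ℝ) < 1))] with x hx
      exact hx
    filter_upwards [hhalf, h1', eventually_ge_atTop (1:ℝ)] with x hx hx1 hxge
    have hxpos : (0:ℝ) < x := lt_of_lt_of_le one_pos hxge
    have h2pos : (0:ℝ) < x ^ (2:ℝ) := Real.rpow_pos_of_pos hxpos 2
    have hle : Real.exp (-(1/2) * x ^ α) ≤ (x ^ (2:ℝ))⁻¹ := by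
      rw [inv_eq_one_div, le_div_iff₀ h2pos]
      nlinarith [Real.exp_pos (-(1/2) * x ^ α)]
    calc G x ≤ Real.exp (-(1/2) * x ^ α) := hx
      _ ≤ (x ^ (2:ℝ))⁻¹ := hle
      _ = x ^ (-2:ℝ) := by rw [Real.rpow_neg hxpos.le]
  -- pick X0
  obtain ⟨X0, hX01, hX0b⟩ : ∃ X0 : ℝ, 1 ≤ X0 ∧ ∀ x ≥ X0, G x ≤ x ^ (-2:ℝ) := by
    obtain ⟨N, hN⟩ := eventually_atTop.mp hbound
    exact ⟨max N 1, le_max_right _ _, fun x hx => hN x (le_trans (le_max_left _ _) hx)⟩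
  have hX0pos : (0:ℝ) < X0 := lt_of_lt_of_le one_pos hX01
  -- integrability
  have hint : IntegrableOn G (Set.Ioi X0) := by
    have hmono : IntegrableOn (fun x : ℝ => x ^ (-2:ℝ)) (Set.Ioi X0) :=
      integrableOn_Ioi_rpow_of_lt (by norm_num) hX0pos
    apply hmono.mono' (hG_cont.aestronglyMeasurable.restrict)
    filter_upwards [ae_restrict_mem measurableSet_Ioi] with x hx
    rw [Real.norm_eq_abs, hG, abs_of_pos (Real.exp_pos _)]
    exact hX0b x (le_of_lt hx)
  set f : ℝ → ℝ := fun a => ∫ x in Set.Ioi a, G x with hf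
  set I : ℝ := ∫ x in Set.Ioi X0, G x with hI
  have key : ∀ a, X0 ≤ a → f a = I - ∫ x in X0..a, G x := by
    intro a ha
    have hsplit : I = (∫ x in Set.Ioc X0 a, G x) + ∫ x in Set.Ioi a, G x := by
      rw [hI, ← MeasureTheory.setIntegral_union]
      · rw [Set.Ioc_union_Ioi_eq_Ioi ha]
      · exact Set.Ioc_disjoint_Ioi le_rfl
      · exact measurableSet_Ioi
      · exact hint.mono_set (Set.Ioc_subset_Ioi_self.trans (le_refl _))
      · exact hint.mono_set (fun x hx => lt_of_le_of_lt ha hx)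
    rw [intervalIntegral.integral_of_le ha]
    rw [hsplit]; ring
  -- f tendsto 0
  have hf0 : Tendsto f atTop (nhds 0) := by
    have hII := MeasureTheory.intervalIntegral_tendsto_integral_Ioi X0 hint tendsto_id
    have := (tendsto_const_nhds (x := I)).sub hII
    rw [sub_self] at this
    refine this.congr' ?_
    filter_upwards [eventually_ge_atTop X0] with a ha
    exact (key a ha).symm
  -- g and its limit
  set g : ℝ → ℝ := fun a => G a * (a ^ (1 - α) / α) with hg
  have hg0 : Tendsto g atTop (nhds 0) := by
    have haux := (aux_rpow_exp α (1 - α) hα).div_const α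
    rw [zero_div] at haux
    apply squeeze_zero' ?_ ?_ haux
    · filter_upwards [eventually_gt_atTop (0:ℝ)] with a ha
      have : (0:ℝ) < a ^ (1 - α) := Real.rpow_pos_of_pos ha _
      positivity
    · filter_upwards [hhalf, eventually_ge_atTop (0:ℝ)] with a ha ha0
      have h1a : (0:ℝ) ≤ a ^ (1 - α) := Real.rpow_nonneg ha0 _
      calc G a * (a ^ (1 - α) / α) ≤ Real.exp (-(1/2) * a ^ α) * (a ^ (1 - α) / α) := by
            apply mul_le_mul_of_nonneg_right ha
            positivity
        _ = a ^ (1 - α) * Real.exp (-(1/2) * a ^ α) / α := by ring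
  -- derivative of f
  have hff' : ∀ᶠ a in atTop, HasDerivAt f (-G a) a := by
    filter_upwards [eventually_gt_atTop X0] with a ha
    have hIa : HasDerivAt (fun u => ∫ x in X0..u, G x) (G a) a :=
      intervalIntegral.integral_hasDerivAt_right (hG_cont.intervalIntegrable _ _)
        (hG_cont.stronglyMeasurableAtFilter _ _) hG_cont.continuousAt
    have h2a : HasDerivAt (fun u => I - ∫ x in X0..u, G x) (-G a) a := hIa.const_sub I
    apply h2a.congr_of_eventuallyEq
    filter_upwards [isOpen_Ioi.mem_nhds ha] with b hb
    exact key b (le_of_lt hb)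
  -- derivative of g
  set φ : ℝ → ℝ := fun a =>
    (-(α * a ^ (α - 1) + h' a)) * (a ^ (1 - α) / α) + (1 - α) * a ^ (1 - α - 1) / α with hφdef
  have hgg' : ∀ᶠ a in atTop, HasDerivAt g (G a * φ a) a := by
    filter_upwards [eventually_gt_atTop (0:ℝ)] with a ha
    have hra : HasDerivAt (fun x : ℝ => x ^ α) (α * a ^ (α - 1)) a :=
      Real.hasDerivAt_rpow_const (Or.inl (ne_of_gt ha))
    have hH : HasDerivAt (fun x => -(x ^ α + h x)) (-(α * a ^ (α - 1) + h' a)) a :=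
      (hra.add (hd a)).neg
    have hc : HasDerivAt G (Real.exp (-(a ^ α + h a)) * (-(α * a ^ (α - 1) + h' a))) a := hH.exp
    have hd2 : HasDerivAt (fun x : ℝ => x ^ (1 - α) / α) ((1 - α) * a ^ (1 - α - 1) / α) a :=
      (Real.hasDerivAt_rpow_const (Or.inl (ne_of_gt ha))).div_const α
    have := hc.mul hd2
    refine this.congr_deriv ?_
    simp only [hG]
    ring
  -- limit of φ
  have hφ : Tendsto φ atTop (nhds (-1)) := by
    have hlim : Tendsto (fun a : ℝ => -1 - (h' a / a ^ (α - 1)) / α + (1 - α) * a ^ (-α) / α)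
        atTop (nhds (-1 - 0 / α + (1 - α) * 0 / α)) := by
      exact (tendsto_const_nhds.sub (h2.div_const α)).add
        (((tendsto_rpow_neg_atTop hα).const_mul (1 - α)).div_const α)
    simp only [zero_div, mul_zero, sub_zero, add_zero] at hlim
    refine hlim.congr' ?_
    filter_upwards [eventually_gt_atTop (0:ℝ)] with a ha
    have h10 : a ^ (α - 1) * a ^ (1 - α) = 1 := by
      rw [← Real.rpow_add ha]
      norm_num
    have h11 : a ^ (1 - α) = (a ^ (α - 1))⁻¹ := by
      rw [← Real.rpow_neg (le_of_lt ha)]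
      ring_nf
    have h12 : a ^ (1 - α - 1) = a ^ (-α) := by ring_nf
    have hp : a ^ (α - 1) ≠ 0 := ne_of_gt (Real.rpow_pos_of_pos ha _)
    rw [hφdef]
    simp only
    rw [h12, h11]
    field_simp
    ring_nf
    try exact Or.inl trivial
  -- g' nonzero and quotient limit
  have hφne : ∀ᶠ a in atTop, φ a ≠ 0 := hφ.eventually_ne (by norm_num)
  have hg'ne : ∀ᶠ a in atTop, G a * φ a ≠ 0 := by
    filter_upwards [hφne] with a ha
    exact mul_ne_zero (Real.exp_ne_zero _) ha
  have hdiv : Tendsto (fun a => (-G a) / (G a * φ a)) atTop (nhds 1) := by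
    have hq : Tendsto (fun a => (-1 : ℝ) / φ a) atTop (nhds ((-1) / (-1))) :=
      tendsto_const_nhds.div hφ (by norm_num)
    norm_num at hq
    refine hq.congr' ?_
    filter_upwards [hφne] with a ha
    have hGne : G a ≠ 0 := Real.exp_ne_zero _
    field_simp
  have final := HasDerivAt.lhopital_zero_atTop hff' hgg' hg'ne hf0 hg0 hdiv
  refine final.congr fun a => ?_
  exact (div_div (f a) (G a) (a ^ (1 - α) / α)).symm
end

section
/- Under the same hypotheses (survival function exp(-(x^α+h(x))) with h(x)=o(x^α), h'(x)=o(x^{α-1})), the second moment of the overshoot satisfies E[Z(a)²] / (2a^{2(1-α)}/α²) → 1 as a→∞. -/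
open Real Filter MeasureTheory

lemma aux_decay (α : ℝ) (hα : 0 < α) (h : ℝ → ℝ)
    (h1 : Tendsto (fun x => h x / x ^ α) atTop (nhds 0)) (p : ℝ) :
    Tendsto (fun x => x ^ p * Real.exp (-(x ^ α + h x))) atTop (nhds 0) := by
  have hlog : Tendsto (fun x : ℝ => Real.log x / x ^ α) atTop (nhds 0) :=
    (isLittleO_log_rpow_atTop hα).tendsto_div_nhds_zero
  have hfac : Tendsto (fun x : ℝ => 1 + h x / x ^ α - p * (Real.log x / x ^ α))
      atTop (nhds 1) := by
    have := (tendsto_const_nhds (x := (1:ℝ)) (f := atTop)).add h1 |>.sub (hlog.const_mul p)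
    simpa using this
  have hmul : Tendsto (fun x : ℝ =>
      x ^ α * (1 + h x / x ^ α - p * (Real.log x / x ^ α))) atTop atTop :=
    (tendsto_rpow_atTop hα).atTop_mul_pos one_pos hfac
  have hexp : Tendsto (fun x : ℝ =>
      Real.exp (-(x ^ α * (1 + h x / x ^ α - p * (Real.log x / x ^ α))))) atTop (nhds 0) :=
    Real.tendsto_exp_atBot.comp (tendsto_neg_atTop_atBot.comp hmul)
  refine hexp.congr' ?_
  filter_upwards [eventually_gt_atTop (0:ℝ)] with x hx
  have hxa : (0:ℝ) < x ^ α := Real.rpow_pos_of_pos hx α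
  have : x ^ α * (1 + h x / x ^ α - p * (Real.log x / x ^ α))
      = x ^ α + h x - p * Real.log x := by
    field_simp
  rw [this, Real.rpow_def_of_pos hx p, ← Real.exp_add]
  congr 1
  ring

lemma aux_tail (f : ℝ → ℝ) (a₀ a : ℝ) (hle : a₀ ≤ a)
    (hint : IntegrableOn f (Set.Ioi a₀)) :
    (∫ x in Set.Ioi a₀, f x) = (∫ x in a₀..a, f x) + ∫ x in Set.Ioi a, f x := by
  rw [intervalIntegral.integral_of_le hle, ← MeasureTheory.setIntegral_union
    (Set.Ioc_disjoint_Ioi le_rfl) measurableSet_Ioi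
    (hint.mono_set Set.Ioc_subset_Ioi_self) (hint.mono_set (Set.Ioi_subset_Ioi hle)),
    Set.Ioc_union_Ioi_eq_Ioi hle]

/-- Under the same hypotheses, the second moment of the overshoot,
`E[Z(a)²] = 2∫_a^∞ (x-a) exp(-H x) dx / exp(-H a)`, satisfies
`E[Z(a)²] / (2 a^(2(1-α)) / α²) → 1` as `a → ∞`. -/
theorem stmt1 (α : ℝ) (hα : 0 < α) (h h' : ℝ → ℝ)
    (hd : ∀ x, HasDerivAt h (h' x) x)
    (h1 : Tendsto (fun x => h x / x ^ α) atTop (nhds 0))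
    (h2 : Tendsto (fun x => h' x / x ^ (α - 1)) atTop (nhds 0)) :
    Tendsto (fun a =>
        ((2 * ∫ x in Set.Ioi a, (x - a) * Real.exp (-(x ^ α + h x))) /
            Real.exp (-(a ^ α + h a)))
          / (2 * a ^ (2 * (1 - α)) / α ^ 2)) atTop (nhds 1) := by
  set E : ℝ → ℝ := fun x => Real.exp (-(x ^ α + h x)) with hEdef
  have hEpos : ∀ x, 0 < E x := fun x => Real.exp_pos _
  have hhcont : Continuous h := continuous_iff_continuousAt.mpr fun x => (hd x).continuousAt
  have hEcont : Continuous E :=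
    Real.continuous_exp.comp (((Real.continuous_rpow_const hα.le).add hhcont).neg)
  have key : ∀ p : ℝ, Tendsto (fun x => x ^ p * E x) atTop (nhds 0) :=
    fun p => aux_decay α hα h h1 p
  -- choose a₀
  obtain ⟨a₀, ha₀⟩ := (((key 3).eventually (eventually_le_nhds one_pos)).and
      (eventually_gt_atTop (1:ℝ))).exists_forall_of_atTop
  have ha₀1 : (1:ℝ) < a₀ := (ha₀ a₀ le_rfl).2
  have ha₀pos : (0:ℝ) < a₀ := lt_trans one_pos ha₀1
  have hEle : ∀ x ∈ Set.Ioi a₀, E x ≤ x ^ (-3 : ℝ) := by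
    intro x hx
    have hx0 : (0:ℝ) < x := lt_trans ha₀pos hx
    have h3 : (0:ℝ) < x ^ (3:ℝ) := Real.rpow_pos_of_pos hx0 3
    have hb := (ha₀ x (le_of_lt hx)).1
    calc E x ≤ 1 / x ^ (3:ℝ) := by rw [le_div_iff₀ h3, mul_comm]; exact hb
    _ = x ^ (-3:ℝ) := by rw [Real.rpow_neg hx0.le, one_div]
  have hxEle : ∀ x ∈ Set.Ioi a₀, x * E x ≤ x ^ (-2 : ℝ) := by
    intro x hx
    have hx0 : (0:ℝ) < x := lt_trans ha₀pos hx
    have e1 : x * x ^ (-3:ℝ) = x ^ (-2:ℝ) := by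
      rw [show x * x ^ (-3:ℝ) = x ^ (1:ℝ) * x ^ (-3:ℝ) by rw [Real.rpow_one],
        ← Real.rpow_add hx0]
      norm_num
    calc x * E x ≤ x * x ^ (-3:ℝ) :=
          mul_le_mul_of_nonneg_left (hEle x hx) hx0.le
    _ = x ^ (-2:ℝ) := e1
  -- integrability
  have hEint : IntegrableOn E (Set.Ioi a₀) := by
    refine Integrable.mono' (g := fun x => x ^ (-3:ℝ))
      (integrableOn_Ioi_rpow_of_lt (by norm_num) ha₀pos)
      hEcont.aestronglyMeasurable.restrict ?_
    rw [ae_restrict_iff' measurableSet_Ioi]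
    filter_upwards with x hx
    rw [Real.norm_eq_abs, abs_of_pos (hEpos x)]
    exact hEle x hx
  have hxEint : IntegrableOn (fun x => x * E x) (Set.Ioi a₀) := by
    refine Integrable.mono' (g := fun x => x ^ (-2:ℝ))
      (integrableOn_Ioi_rpow_of_lt (by norm_num) ha₀pos)
      (continuous_id.mul hEcont).aestronglyMeasurable.restrict ?_
    rw [ae_restrict_iff' measurableSet_Ioi]
    filter_upwards with x hx
    have hx0 : (0:ℝ) < x := lt_trans ha₀pos hx
    rw [Real.norm_eq_abs, abs_of_pos (mul_pos hx0 (hEpos x))]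
    exact hxEle x hx
  set G : ℝ → ℝ := fun a => ∫ x in Set.Ioi a, E x with hGdef
  set K : ℝ → ℝ := fun a => ∫ x in Set.Ioi a, x * E x with hKdef
  set F : ℝ → ℝ := fun a => ∫ x in Set.Ioi a, (x - a) * E x with hFdef
  have hEintmono : ∀ a, a₀ ≤ a → IntegrableOn E (Set.Ioi a) :=
    fun a ha => hEint.mono_set (Set.Ioi_subset_Ioi ha)
  have hxEintmono : ∀ a, a₀ ≤ a → IntegrableOn (fun x => x * E x) (Set.Ioi a) :=
    fun a ha => hxEint.mono_set (Set.Ioi_subset_Ioi ha)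
  -- tendsto of tails
  have hGtend : Tendsto G atTop (nhds 0) := by
    have ht := intervalIntegral_tendsto_integral_Ioi a₀ hEint tendsto_id
    have h0 : Tendsto (fun a => (∫ x in Set.Ioi a₀, E x) - ∫ x in a₀..a, E x)
        atTop (nhds 0) := by
      simpa using (tendsto_const_nhds (x := ∫ x in Set.Ioi a₀, E x) (f := atTop)).sub ht
    refine h0.congr' ?_
    filter_upwards [eventually_ge_atTop a₀] with a ha
    have := aux_tail E a₀ a ha hEint
    simp only [hGdef]
    linarith
  have hKtend : Tendsto K atTop (nhds 0) := by
    have ht := intervalIntegral_tendsto_integral_Ioi a₀ hxEint tendsto_id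
    have h0 : Tendsto (fun a => (∫ x in Set.Ioi a₀, x * E x) - ∫ x in a₀..a, x * E x)
        atTop (nhds 0) := by
      simpa using (tendsto_const_nhds (x := ∫ x in Set.Ioi a₀, x * E x) (f := atTop)).sub ht
    refine h0.congr' ?_
    filter_upwards [eventually_ge_atTop a₀] with a ha
    have := aux_tail (fun x => x * E x) a₀ a ha hxEint
    simp only [hKdef]
    linarith
  -- F = K - a*G
  have hFeqn : ∀ a, a₀ ≤ a → F a = K a - a * G a := by
    intro a ha
    have hint1 := hxEintmono a ha
    have hint2 : IntegrableOn (fun x => a * E x) (Set.Ioi a) :=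
      (hEintmono a ha).const_mul a
    simp only [hFdef, hKdef, hGdef]
    rw [show (fun x => (x - a) * E x) = fun x => x * E x - a * E x by
        funext x; ring]
    rw [MeasureTheory.integral_sub hint1 hint2, MeasureTheory.integral_const_mul]
  -- F nonneg and F ≤ K
  have hFnonneg : ∀ a, a₀ ≤ a → 0 ≤ F a := by
    intro a ha
    refine setIntegral_nonneg measurableSet_Ioi fun x hx => ?_
    exact mul_nonneg (by simp only [Set.mem_Ioi] at hx; linarith) (hEpos x).le
  have hFleK : ∀ a, a₀ ≤ a → F a ≤ K a := by
    intro a ha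
    have hint1 : IntegrableOn (fun x => (x - a) * E x) (Set.Ioi a) := by
      have : (fun x => (x - a) * E x) = fun x => x * E x - a * E x := by
        funext x; ring
      rw [this]
      exact (hxEintmono a ha).sub ((hEintmono a ha).const_mul a)
    refine setIntegral_mono_on hint1 (hxEintmono a ha) measurableSet_Ioi fun x hx => ?_
    have hx0 : (0:ℝ) < x := lt_trans (lt_of_lt_of_le ha₀pos ha) hx
    have : x - a ≤ x := by linarith [le_trans (le_trans ha₀pos.le ha) (le_of_lt hx)]
    exact mul_le_mul_of_nonneg_right this (hEpos x).le
  have hFtend : Tendsto F atTop (nhds 0) := by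
    refine tendsto_of_tendsto_of_tendsto_of_le_of_le' tendsto_const_nhds hKtend ?_ ?_
    · filter_upwards [eventually_ge_atTop a₀] with a ha using hFnonneg a ha
    · filter_upwards [eventually_ge_atTop a₀] with a ha using hFleK a ha
  -- derivatives of G, K, F
  have hGderiv : ∀ a ∈ Set.Ioi a₀, HasDerivAt G (-(E a)) a := by
    intro a ha
    have hii : IntervalIntegrable E volume a₀ a := hEcont.intervalIntegrable _ _
    have hder : HasDerivAt (fun y => (∫ x in Set.Ioi a₀, E x) - ∫ x in a₀..y, E x)
        (-(E a)) a :=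
      (intervalIntegral.integral_hasDerivAt_right hii
        (hEcont.stronglyMeasurableAtFilter _ _) hEcont.continuousAt).const_sub _
    refine hder.congr_of_eventuallyEq ?_
    filter_upwards [Ioi_mem_nhds ha] with y hy
    have := aux_tail E a₀ y (le_of_lt hy) hEint
    simp only [hGdef]
    linarith
  have hKderiv : ∀ a ∈ Set.Ioi a₀, HasDerivAt K (-(a * E a)) a := by
    intro a ha
    have hcont : Continuous fun x => x * E x := continuous_id.mul hEcont
    have hii : IntervalIntegrable (fun x => x * E x) volume a₀ a :=
      hcont.intervalIntegrable _ _
    have hder : HasDerivAt (fun y => (∫ x in Set.Ioi a₀, x * E x) - ∫ x in a₀..y, x * E x)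
        (-(a * E a)) a :=
      (intervalIntegral.integral_hasDerivAt_right hii
        (hcont.stronglyMeasurableAtFilter _ _) hcont.continuousAt).const_sub _
    refine hder.congr_of_eventuallyEq ?_
    filter_upwards [Ioi_mem_nhds ha] with y hy
    have := aux_tail (fun x => x * E x) a₀ y (le_of_lt hy) hxEint
    simp only [hKdef]
    linarith
  have hFderiv : ∀ a ∈ Set.Ioi a₀, HasDerivAt F (-(G a)) a := by
    intro a ha
    have hder : HasDerivAt (fun y => K y - y * G y)
        (-(a * E a) - (1 * G a + a * -(E a))) a :=
      (hKderiv a ha).sub ((hasDerivAt_id a).mul (hGderiv a ha))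
    have heq : -(a * E a) - (1 * G a + a * -(E a)) = -(G a) := by ring
    rw [heq] at hder
    refine hder.congr_of_eventuallyEq ?_
    filter_upwards [Ioi_mem_nhds ha] with y hy using hFeqn y (le_of_lt hy)
  -- derivative of E
  have hEderiv : ∀ a : ℝ, 0 < a →
      HasDerivAt E (E a * -(α * a ^ (α - 1) + h' a)) a := by
    intro a ha
    have hr : HasDerivAt (fun x : ℝ => x ^ α) (α * a ^ (α - 1)) a :=
      Real.hasDerivAt_rpow_const (Or.inl ha.ne')
    exact ((hr.add (hd a)).neg).exp
  -- the comparison functions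
  set B : ℝ → ℝ := fun a => (1 - α) * a ^ (1 - α - 1) -
      a ^ (1 - α) * (α * a ^ (α - 1) + h' a) with hBdef
  set C : ℝ → ℝ := fun a => (2 * (1 - α)) * a ^ (2 * (1 - α) - 1) -
      a ^ (2 * (1 - α)) * (α * a ^ (α - 1) + h' a) with hCdef
  set g₁ : ℝ → ℝ := fun a => a ^ (1 - α) * E a / α with hg₁def
  set g₂ : ℝ → ℝ := fun a => a ^ (2 * (1 - α)) * E a / α ^ 2 with hg₂def
  have hg₁deriv : ∀ a : ℝ, 0 < a → HasDerivAt g₁ (E a * B a / α) a := by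
    intro a ha
    have hr : HasDerivAt (fun x : ℝ => x ^ (1 - α)) ((1 - α) * a ^ (1 - α - 1)) a :=
      Real.hasDerivAt_rpow_const (Or.inl ha.ne')
    have := (hr.mul (hEderiv a ha)).div_const α
    refine this.congr_deriv ?_
    simp only [hBdef]
    ring
  have hg₂deriv : ∀ a : ℝ, 0 < a → HasDerivAt g₂ (E a * C a / α ^ 2) a := by
    intro a ha
    have hr : HasDerivAt (fun x : ℝ => x ^ (2 * (1 - α)))
        ((2 * (1 - α)) * a ^ (2 * (1 - α) - 1)) a :=
      Real.hasDerivAt_rpow_const (Or.inl ha.ne')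
    have := (hr.mul (hEderiv a ha)).div_const (α ^ 2)
    refine this.congr_deriv ?_
    simp only [hCdef]
    ring
  -- limits of B and C·a^(α-1)
  have hrpowne : ∀ a : ℝ, 0 < a → a ^ (α - 1) ≠ 0 :=
    fun a ha => (Real.rpow_pos_of_pos ha _).ne'
  have hBlim : Tendsto B atTop (nhds (-α)) := by
    have hlim : Tendsto (fun a : ℝ => (1 - α) * a ^ (-α) - (α + h' a / a ^ (α - 1)))
        atTop (nhds (-α)) := by
      have := ((tendsto_rpow_neg_atTop hα).const_mul (1 - α)).sub
        ((tendsto_const_nhds (x := α) (f := atTop)).add h2)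
      simpa using this
    refine hlim.congr' ?_
    filter_upwards [eventually_gt_atTop (0:ℝ)] with a ha
    have hne := hrpowne a ha
    have e1 : a ^ (1 - α - 1) = a ^ (-α) := by congr 1; ring
    have e2 : a ^ (1 - α) = (a ^ (α - 1))⁻¹ := by
      rw [show (1 - α : ℝ) = -(α - 1) by ring, Real.rpow_neg ha.le]
    simp only [hBdef]
    rw [e1, e2]
    field_simp
  have hClim : Tendsto (fun a => C a * a ^ (α - 1)) atTop (nhds (-α)) := by
    have hlim : Tendsto (fun a : ℝ => (2 * (1 - α)) * a ^ (-α) - (α + h' a / a ^ (α - 1)))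
        atTop (nhds (-α)) := by
      have := ((tendsto_rpow_neg_atTop hα).const_mul (2 * (1 - α))).sub
        ((tendsto_const_nhds (x := α) (f := atTop)).add h2)
      simpa using this
    refine hlim.congr' ?_
    filter_upwards [eventually_gt_atTop (0:ℝ)] with a ha
    have hne := hrpowne a ha
    have key1 : a ^ (2 * (1 - α)) * a ^ (α - 1) = (a ^ (α - 1))⁻¹ := by
      rw [← Real.rpow_add ha, show (2 * (1 - α) + (α - 1) : ℝ) = -(α - 1) by ring,
        Real.rpow_neg ha.le]
    have key2 : a ^ (2 * (1 - α) - 1) * a ^ (α - 1) = a ^ (-α) := by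
      rw [← Real.rpow_add ha]; congr 1; ring
    simp only [hCdef]
    rw [show ((2 * (1 - α)) * a ^ (2 * (1 - α) - 1) -
        a ^ (2 * (1 - α)) * (α * a ^ (α - 1) + h' a)) * a ^ (α - 1)
      = (2 * (1 - α)) * (a ^ (2 * (1 - α) - 1) * a ^ (α - 1))
        - (a ^ (2 * (1 - α)) * a ^ (α - 1)) * α * a ^ (α - 1)
        - (a ^ (2 * (1 - α)) * a ^ (α - 1)) * h' a by ring, key1, key2]
    field_simp
    ring
  -- eventual negativity
  have hBneg : ∀ᶠ a in atTop, B a < 0 :=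
    hBlim.eventually (eventually_lt_nhds (by linarith : -α < 0))
  have hCneg : ∀ᶠ a in atTop, C a * a ^ (α - 1) < 0 :=
    hClim.eventually (eventually_lt_nhds (by linarith : -α < 0))
  -- first L'Hopital: G / g₁ → 1
  have step1 : Tendsto (fun a => G a / g₁ a) atTop (nhds 1) := by
    have hg₁tend : Tendsto g₁ atTop (nhds 0) := by
      simpa [hg₁def] using (key (1 - α)).div_const α
    refine HasDerivAt.lhopital_zero_atTop (f' := fun a => -(E a))
      (g' := fun a => E a * B a / α) ?_ ?_ ?_ hGtend hg₁tend ?_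
    · filter_upwards [eventually_gt_atTop a₀] with a ha using hGderiv a ha
    · filter_upwards [eventually_gt_atTop (0:ℝ)] with a ha using hg₁deriv a ha
    · filter_upwards [hBneg] with a hB0
      exact div_ne_zero (mul_ne_zero (hEpos a).ne' hB0.ne) hα.ne'
    · have hdiv : Tendsto (fun a => -α / B a) atTop (nhds 1) := by
        have := (tendsto_const_nhds (x := -α) (f := atTop)).div hBlim
          (by simpa using hα.ne' : (-α : ℝ) ≠ 0)
        rw [div_self (show (-α : ℝ) ≠ 0 by simpa using hα.ne')] at this
        exact this
      refine hdiv.congr' ?_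
      filter_upwards [hBneg] with a hB0
      have hE0 : E a ≠ 0 := (hEpos a).ne'
      have hB0' : B a ≠ 0 := hB0.ne
      field_simp
  -- second L'Hopital: F / g₂ → 1
  have step2 : Tendsto (fun a => F a / g₂ a) atTop (nhds 1) := by
    have hg₂tend : Tendsto g₂ atTop (nhds 0) := by
      simpa [hg₂def] using (key (2 * (1 - α))).div_const (α ^ 2)
    refine HasDerivAt.lhopital_zero_atTop (f' := fun a => -(G a))
      (g' := fun a => E a * C a / α ^ 2) ?_ ?_ ?_ hFtend hg₂tend ?_
    · filter_upwards [eventually_gt_atTop a₀] with a ha using hFderiv a ha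
    · filter_upwards [eventually_gt_atTop (0:ℝ)] with a ha using hg₂deriv a ha
    · filter_upwards [hCneg] with a hC0
      have hC0' : C a ≠ 0 := fun hc => by
        rw [hc, zero_mul] at hC0; exact lt_irrefl 0 hC0
      exact div_ne_zero (mul_ne_zero (hEpos a).ne' hC0') (pow_ne_zero 2 hα.ne')
    · have hfac2 : Tendsto (fun a => α / (-(C a * a ^ (α - 1)))) atTop (nhds 1) := by
        have := (tendsto_const_nhds (x := α) (f := atTop)).div hClim.neg
          (by simpa using hα.ne' : -(-α) ≠ 0)
        rw [neg_neg, div_self hα.ne'] at this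
        exact this
      have hmul := step1.mul hfac2
      rw [mul_one] at hmul
      refine hmul.congr' ?_
      filter_upwards [hCneg, eventually_gt_atTop (0:ℝ)] with a hC0 ha
      have hE0 : E a ≠ 0 := (hEpos a).ne'
      have hC0' : C a ≠ 0 := fun hc => by
        rw [hc, zero_mul] at hC0; exact lt_irrefl 0 hC0
      have hv : a ^ (α - 1) ≠ 0 := hrpowne a ha
      have hu : a ^ (1 - α) ≠ 0 := (Real.rpow_pos_of_pos ha _).ne'
      have huv : a ^ (1 - α) * a ^ (α - 1) = 1 := by
        rw [← Real.rpow_add ha]; norm_num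
      have hden2 : a ^ (1 - α) * E a / α * -(C a * a ^ (α - 1)) = -(E a * C a) / α := by
        have e : a ^ (1 - α) * E a / α * -(C a * a ^ (α - 1))
            = -(a ^ (1 - α) * a ^ (α - 1) * (E a * C a)) / α := by ring
        rw [e, huv]; ring
      simp only [hg₁def]
      rw [div_mul_div_comm, hden2]
      field_simp
  -- conclude
  refine step2.congr' ?_
  filter_upwards [eventually_gt_atTop (0:ℝ)] with a ha
  have hE0 : E a ≠ 0 := (hEpos a).ne'
  have hb : a ^ (2 * (1 - α)) ≠ 0 := (Real.rpow_pos_of_pos ha _).ne'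
  simp only [hFdef, hg₂def, hEdef]
  field_simp
end

section
/- Let H be twice differentiable with H(x)=x^α+h(x) where h(x)=o(x^α), h'(x)=o(x^{α-1}) and h''(x)=o(x^{α-2}) as x→∞, α>0. Then the expected overshoot f(a)=∫_a^∞ e^{-H(x)}dx / e^{-H(a)} satisfies f(a) = (1/H'(a))·(1 + O(a^{-α})) as a→∞. -/
open Real Filter MeasureTheory Asymptotics

lemma aux_tendsto (α : ℝ) (hα : 0 < α) (s : ℝ) :
    Tendsto (fun x : ℝ => x ^ s * Real.exp (-(x ^ α) / 2)) atTop (nhds 0) := by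
  have h0 := tendsto_rpow_mul_exp_neg_mul_atTop_nhds_zero (s / α) (1/2) (by norm_num)
  have comp := h0.comp (tendsto_rpow_atTop hα)
  apply comp.congr'
  filter_upwards [eventually_gt_atTop (0:ℝ)] with x hx
  have h1 : (x ^ α) ^ (s / α) = x ^ s := by
    rw [← Real.rpow_mul hx.le]
    congr 1
    field_simp
  simp only [Function.comp]
  rw [h1]
  ring_nf

lemma ev_bound {φ : ℝ → ℝ} {p c : ℝ} (hc : 0 < c)
    (hT : Tendsto (fun x => φ x / x ^ p) atTop (nhds 0)) :
    ∀ᶠ x in atTop, |φ x| ≤ c * x ^ p := by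
  have hball : ∀ᶠ y in nhds (0:ℝ), |y| ≤ c := by
    filter_upwards [Metric.closedBall_mem_nhds (0:ℝ) hc] with y hy
    simpa [Real.dist_eq] using hy
  filter_upwards [hT.eventually hball, eventually_gt_atTop (0:ℝ)] with x hx hx0
  have hxp : (0:ℝ) < x ^ p := Real.rpow_pos_of_pos hx0 p
  rw [abs_div, abs_of_pos hxp, div_le_iff₀ hxp] at hx
  linarith

set_option maxHeartbeats 1000000 in
/-- For `H x = x^α + h x` twice differentiable with
`h x = o(x^α)`, `h' x = o(x^(α-1))`, `h'' x = o(x^(α-2))`, the expected overshoot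
`f a = ∫_a^∞ e^{-H x} dx / e^{-H a}` satisfies `f a = (1/H' a) (1 + O(a^{-α}))`,
i.e. `f a * H' a - 1 = O(a^{-α})` as `a → ∞`, where `H' a = α a^(α-1) + h' a`. -/
theorem stmt2 (α : ℝ) (hα : 0 < α) (h h' h'' : ℝ → ℝ)
    (hd1 : ∀ x, HasDerivAt h (h' x) x)
    (hd2 : ∀ x, HasDerivAt h' (h'' x) x)
    (h1 : Tendsto (fun x => h x / x ^ α) atTop (nhds 0))
    (h2 : Tendsto (fun x => h' x / x ^ (α - 1)) atTop (nhds 0))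
    (h3 : Tendsto (fun x => h'' x / x ^ (α - 2)) atTop (nhds 0)) :
    (fun a =>
        ((∫ x in Set.Ioi a, Real.exp (-(x ^ α + h x))) / Real.exp (-(a ^ α + h a)))
          * (α * a ^ (α - 1) + h' a) - 1)
      =O[atTop] (fun a => a ^ (-α)) := by
  set K : ℝ := α * |α - 1| + 1 with hK
  have hKpos : 0 < K := by positivity
  set C : ℝ := 4 * K / α ^ 2 with hC
  have hCpos : 0 < C := by positivity
  -- eventual bound at a single threshold A
  have hexp2 : ∀ᶠ x in atTop, Real.exp (-(x ^ α) / 2) ≤ x ^ (-2 : ℝ) := by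
    have ht := aux_tendsto α hα 2
    have hev : ∀ᶠ y in nhds (0:ℝ), y ≤ 1 := eventually_le_nhds (by norm_num)
    filter_upwards [ht.eventually hev, eventually_gt_atTop (0:ℝ)] with x hx hx0
    have hp2 : (0:ℝ) < x ^ (2:ℝ) := Real.rpow_pos_of_pos hx0 _
    rw [Real.rpow_neg hx0.le, inv_eq_one_div, le_div_iff₀ hp2]
    linarith [hx]
  have hbig : ∀ᶠ x in atTop, 1 ≤ x ∧ |h x| ≤ (1/2) * x ^ α ∧
      |h' x| ≤ (α/2) * x ^ (α-1) ∧ |h'' x| ≤ 1 * x ^ (α-2) ∧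
      Real.exp (-(x ^ α) / 2) ≤ x ^ (-2 : ℝ) := by
    filter_upwards [eventually_ge_atTop (1:ℝ), ev_bound (by norm_num : (0:ℝ) < 1/2) h1,
      ev_bound (by positivity : (0:ℝ) < α/2) h2, ev_bound one_pos h3, hexp2] with x e1 e2 e3 e4 e5
    exact ⟨e1, e2, e3, e4, e5⟩
  obtain ⟨A, hA⟩ := eventually_atTop.mp hbig
  have evhalf : ∀ᶠ a in atTop, C * a ^ (-α) ≤ 1/2 := by
    have := (tendsto_rpow_neg_atTop hα).const_mul C
    rw [mul_zero] at this
    exact this.eventually (eventually_le_nhds (by norm_num))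
  -- pointwise facts above the threshold
  have hxpos : ∀ x, A ≤ x → (0:ℝ) < x := fun x hx => lt_of_lt_of_le one_pos (hA x hx).1
  have key : ∀ x, A ≤ x → (α/2) * x ^ (α-1) ≤ α * x ^ (α-1) + h' x := by
    intro x hx
    have e3 := (hA x hx).2.2.1
    have := neg_abs_le (h' x)
    linarith
  have key0 : ∀ x, A ≤ x → 0 < α * x ^ (α-1) + h' x := by
    intro x hx
    have hp : (0:ℝ) < (α/2) * x ^ (α-1) := by
      have := Real.rpow_pos_of_pos (hxpos x hx) (α-1); positivity
    linarith [key x hx]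
  have hexpH : ∀ x, A ≤ x → Real.exp (-(x ^ α + h x)) ≤ Real.exp (-(x ^ α) / 2) := by
    intro x hx
    have e2 := abs_le.mp (hA x hx).2.1
    exact Real.exp_le_exp.mpr (by linarith [e2.1])
  have hG2 : ∀ x, A ≤ x → |α*(α-1)*x^(α-2) + h'' x| ≤ K * x ^ (α-2) := by
    intro x hx
    have e4 := (hA x hx).2.2.2.1
    have hp : (0:ℝ) < x ^ (α-2) := Real.rpow_pos_of_pos (hxpos x hx) _
    calc |α*(α-1)*x^(α-2) + h'' x| ≤ |α*(α-1)*x^(α-2)| + |h'' x| := abs_add_le _ _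
      _ ≤ α * |α - 1| * x ^ (α-2) + 1*x^(α-2) := by
          rw [abs_mul, abs_mul, abs_of_pos hp, abs_of_pos hα]
          linarith
      _ = K * x ^ (α-2) := by rw [hK]; ring
  -- the main estimate
  rw [Asymptotics.isBigO_iff]
  refine ⟨2 * C, ?_⟩
  filter_upwards [eventually_ge_atTop A, evhalf, eventually_ge_atTop (1:ℝ)] with a hAa hhalf ha1
  have ha0 : (0:ℝ) < a := lt_of_lt_of_le one_pos ha1
  have hGa : 0 < α * a ^ (α-1) + h' a := key0 a hAa
  have hE0 : 0 < Real.exp (-(a ^ α + h a)) := Real.exp_pos _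
  -- ratio bound for x ≥ a
  have hratio : ∀ x, a ≤ x →
      |α*(α-1)*x^(α-2) + h'' x| / (α * x ^ (α-1) + h' x)^2 ≤ C * a ^ (-α) := by
    intro x hx
    have hAx : A ≤ x := hAa.trans hx
    have hx0 : 0 < x := hxpos x hAx
    have hd1' : (0:ℝ) < ((α/2) * x ^ (α-1))^2 := by
      have := Real.rpow_pos_of_pos hx0 (α-1); positivity
    have hdle : ((α/2) * x ^ (α-1))^2 ≤ (α * x ^ (α-1) + h' x)^2 := by
      apply pow_le_pow_left₀ _ (key x hAx)
      have := Real.rpow_pos_of_pos hx0 (α-1); positivity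
    have step1 : |α*(α-1)*x^(α-2) + h'' x| / (α * x ^ (α-1) + h' x)^2
        ≤ (K * x ^ (α-2)) / ((α/2) * x ^ (α-1))^2 := by
      apply div_le_div₀ (by positivity) (hG2 x hAx) hd1' hdle
    have hxs : x ^ (α-2) / x ^ ((α-1)*2) = x ^ (-α) := by
      rw [← Real.rpow_sub hx0]
      congr 1
      ring
    have step2 : (K * x ^ (α-2)) / ((α/2) * x ^ (α-1))^2 = C * x ^ (-α) := by
      have h2 : ((α/2) * x ^ (α-1))^2 = (α/2)^2 * x ^ ((α-1)*2) := by
        rw [mul_pow, ← Real.rpow_natCast (x ^ (α-1)) 2, ← Real.rpow_mul hx0.le]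
        norm_num
      rw [h2, hC, ← hxs]
      have hxp1 : (0:ℝ) < x ^ ((α-1)*2) := Real.rpow_pos_of_pos hx0 _
      field_simp
      ring
    have step3 : x ^ (-α) ≤ a ^ (-α) :=
      Real.rpow_le_rpow_of_nonpos ha0 hx (neg_nonpos.mpr hα.le)
    calc |α*(α-1)*x^(α-2) + h'' x| / (α * x ^ (α-1) + h' x)^2
        ≤ C * x ^ (-α) := step1.trans_eq step2
      _ ≤ C * a ^ (-α) := mul_le_mul_of_nonneg_left step3 hCpos.le
  -- continuity / measurability
  have ch : Continuous h := by
    rw [continuous_iff_continuousAt]; exact fun x => (hd1 x).continuousAt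
  have ch' : Continuous h' := by
    rw [continuous_iff_continuousAt]; exact fun x => (hd2 x).continuousAt
  have cont_exp : Continuous fun x : ℝ => Real.exp (-(x ^ α + h x)) :=
    Real.continuous_exp.comp (((Real.continuous_rpow_const hα.le).add ch).neg)
  have h''meas : Measurable h'' := by
    have e : h'' = deriv h' := funext fun x => ((hd2 x).deriv).symm
    rw [e]; exact measurable_deriv h'
  -- integrability of e^{-H}
  have int1 : IntegrableOn (fun x => Real.exp (-(x ^ α + h x))) (Set.Ioi a) := by
    have hi : IntegrableOn (fun x : ℝ => x ^ (-2:ℝ)) (Set.Ioi a) :=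
      integrableOn_Ioi_rpow_of_lt (by norm_num) ha0
    refine Integrable.mono' hi cont_exp.aestronglyMeasurable ?_
    rw [ae_restrict_iff' measurableSet_Ioi]
    refine ae_of_all _ fun x hx => ?_
    have hAx : A ≤ x := hAa.trans (le_of_lt hx)
    rw [Real.norm_eq_abs, abs_of_pos (Real.exp_pos _)]
    exact (hexpH x hAx).trans (hA x hAx).2.2.2.2
  -- the a.e. bound for the second integrand
  have haebound : ∀ᵐ x ∂(volume.restrict (Set.Ioi a)),
      ‖Real.exp (-(x ^ α + h x)) * (α*(α-1)*x^(α-2) + h'' x) / (α * x ^ (α-1) + h' x)^2‖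
        ≤ C * a ^ (-α) * Real.exp (-(x ^ α + h x)) := by
    rw [ae_restrict_iff' measurableSet_Ioi]
    refine ae_of_all _ fun x hx => ?_
    have hAx : A ≤ x := hAa.trans (le_of_lt hx)
    have hGx : 0 < α * x ^ (α-1) + h' x := key0 x hAx
    rw [Real.norm_eq_abs, abs_div, abs_mul, abs_of_pos (Real.exp_pos _),
      abs_of_nonneg (sq_nonneg (α * x ^ (α-1) + h' x))]
    calc Real.exp (-(x ^ α + h x)) * |α*(α-1)*x^(α-2) + h'' x| / (α * x ^ (α-1) + h' x)^2
        = Real.exp (-(x ^ α + h x)) * (|α*(α-1)*x^(α-2) + h'' x| / (α * x ^ (α-1) + h' x)^2) := by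
          ring
      _ ≤ Real.exp (-(x ^ α + h x)) * (C * a ^ (-α)) :=
          mul_le_mul_of_nonneg_left (hratio x (le_of_lt hx)) (Real.exp_pos _).le
      _ = C * a ^ (-α) * Real.exp (-(x ^ α + h x)) := by ring
  -- integrability of the second integrand
  have int2 : IntegrableOn (fun x =>
      Real.exp (-(x ^ α + h x)) * (α*(α-1)*x^(α-2) + h'' x) / (α * x ^ (α-1) + h' x)^2)
      (Set.Ioi a) := by
    refine Integrable.mono' (int1.const_mul (C * a ^ (-α))) ?_ haebound
    have contOn1 : ContinuousOn (fun x : ℝ => α*(α-1)*x^(α-2)) (Set.Ioi a) :=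
      continuousOn_const.mul (ContinuousOn.rpow_const continuousOn_id
        (fun x hx => Or.inl (ne_of_gt (lt_trans ha0 hx))))
    have contOn2 : ContinuousOn (fun x : ℝ => (α * x ^ (α-1) + h' x)^2) (Set.Ioi a) := by
      apply ContinuousOn.pow
      exact (continuousOn_const.mul (ContinuousOn.rpow_const continuousOn_id
        (fun x hx => Or.inl (ne_of_gt (lt_trans ha0 hx))))).add ch'.continuousOn
    have m1 : AEStronglyMeasurable (fun x : ℝ => Real.exp (-(x ^ α + h x)))
        (volume.restrict (Set.Ioi a)) := cont_exp.aestronglyMeasurable.restrict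
    have m2 : AEStronglyMeasurable (fun x : ℝ => α*(α-1)*x^(α-2))
        (volume.restrict (Set.Ioi a)) := contOn1.aestronglyMeasurable measurableSet_Ioi
    have m3 : AEStronglyMeasurable h'' (volume.restrict (Set.Ioi a)) :=
      h''meas.aestronglyMeasurable.restrict
    have m4 : AEStronglyMeasurable (fun x : ℝ => (α * x ^ (α-1) + h' x)^2)
        (volume.restrict (Set.Ioi a)) := contOn2.aestronglyMeasurable measurableSet_Ioi
    exact ((m1.aemeasurable.mul (m2.aemeasurable.add m3.aemeasurable)).div
      m4.aemeasurable).aestronglyMeasurable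
  -- derivative of F = -(e^{-H}/H')
  have hderivF : ∀ x ∈ Set.Ici a, HasDerivAt
      (fun y => -(Real.exp (-(y ^ α + h y)) / (α * y ^ (α-1) + h' y)))
      (Real.exp (-(x ^ α + h x)) +
        Real.exp (-(x ^ α + h x)) * (α*(α-1)*x^(α-2) + h'' x) / (α * x ^ (α-1) + h' x)^2)
      x := by
    intro x hx
    have hAx : A ≤ x := hAa.trans hx
    have hx0 : 0 < x := hxpos x hAx
    have hGne : (α * x ^ (α-1) + h' x) ≠ 0 := (key0 x hAx).ne'
    have hH : HasDerivAt (fun y : ℝ => y ^ α + h y) (α * x ^ (α-1) + h' x) x :=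
      (Real.hasDerivAt_rpow_const (Or.inl hx0.ne')).add (hd1 x)
    have hE : HasDerivAt (fun y => Real.exp (-(y ^ α + h y)))
        (Real.exp (-(x ^ α + h x)) * (-(α * x ^ (α-1) + h' x))) x := hH.neg.exp
    have hGd : HasDerivAt (fun y => α * y ^ (α-1) + h' y)
        (α * ((α-1) * x ^ (α-1-1)) + h'' x) x :=
      ((Real.hasDerivAt_rpow_const (Or.inl hx0.ne')).const_mul α).add (hd2 x)
    have hmain := (hE.div hGd hGne).neg
    refine hmain.congr_deriv ?_
    rw [show α - 1 - 1 = α - 2 by ring]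
    field_simp
    ring
  -- limit of F at infinity
  have hFlim : Tendsto (fun x => -(Real.exp (-(x ^ α + h x)) / (α * x ^ (α-1) + h' x)))
      atTop (nhds 0) := by
    have htend : Tendsto (fun x : ℝ => (2/α) * (x ^ (1-α) * Real.exp (-(x ^ α) / 2)))
        atTop (nhds 0) := by
      have := (aux_tendsto α hα (1-α)).const_mul (2/α)
      simpa using this
    apply squeeze_zero_norm' ?_ htend
    filter_upwards [eventually_ge_atTop A] with x hAx
    have hx0 : 0 < x := hxpos x hAx
    have hb : Real.exp (-(x ^ α + h x)) / (α * x ^ (α-1) + h' x)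
        ≤ Real.exp (-(x ^ α) / 2) / ((α/2) * x ^ (α-1)) :=
      div_le_div₀ (Real.exp_pos _).le (hexpH x hAx)
        (by have := Real.rpow_pos_of_pos hx0 (α-1); positivity) (key x hAx)
    rw [norm_neg, Real.norm_eq_abs, abs_div, abs_of_pos (Real.exp_pos _),
      abs_of_pos (key0 x hAx)]
    refine hb.trans_eq ?_
    rw [show (1-α) = -(α-1) by ring, Real.rpow_neg hx0.le]
    have hxp : (0:ℝ) < x ^ (α-1) := Real.rpow_pos_of_pos hx0 _
    field_simp
  -- FTC on (a, ∞)
  have hFTC := integral_Ioi_of_hasDerivAt_of_tendsto' hderivF (int1.add int2) hFlim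
  rw [integral_add int1 int2] at hFTC
  set I := ∫ x in Set.Ioi a, Real.exp (-(x ^ α + h x)) with hI
  set J := ∫ x in Set.Ioi a,
    Real.exp (-(x ^ α + h x)) * (α*(α-1)*x^(α-2) + h'' x) / (α * x ^ (α-1) + h' x)^2 with hJdef
  have hIJ : I + J = Real.exp (-(a ^ α + h a)) / (α * a ^ (α-1) + h' a) := by
    rw [hFTC]; ring
  have hInonneg : 0 ≤ I := by
    apply setIntegral_nonneg measurableSet_Ioi
    intro x _; exact (Real.exp_pos _).le
  -- bound on J
  have hJ : |J| ≤ C * a ^ (-α) * I := by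
    have hn := norm_integral_le_of_norm_le (int1.const_mul (C * a ^ (-α))) haebound
    rw [Real.norm_eq_abs] at hn
    calc |J| ≤ ∫ x in Set.Ioi a, C * a ^ (-α) * Real.exp (-(x ^ α + h x)) := hn
      _ = C * a ^ (-α) * I := by rw [integral_const_mul]
  -- algebra
  set Q := I / Real.exp (-(a ^ α + h a)) * (α * a ^ (α-1) + h' a) - 1 with hQdef
  have hQ : Q = -(J * (α * a ^ (α-1) + h' a) / Real.exp (-(a ^ α + h a))) := by
    have hIval : I = Real.exp (-(a ^ α + h a)) / (α * a ^ (α-1) + h' a) - J := by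
      linarith
    rw [hQdef, hIval]
    field_simp
    ring
  have hT : I / Real.exp (-(a ^ α + h a)) * (α * a ^ (α-1) + h' a) = 1 + Q := by
    rw [hQdef]; ring
  have hQval : |Q| = |J| * (α * a ^ (α-1) + h' a) / Real.exp (-(a ^ α + h a)) := by
    rw [hQ, abs_neg, abs_div, abs_mul, abs_of_pos hGa, abs_of_pos hE0]
  have hQabs : |Q| ≤ C * a ^ (-α) * (1 + Q) := by
    rw [hQval, ← hT, div_le_iff₀ hE0]
    calc |J| * (α * a ^ (α-1) + h' a)
        ≤ (C * a ^ (-α) * I) * (α * a ^ (α-1) + h' a) :=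
          mul_le_mul_of_nonneg_right hJ hGa.le
      _ = C * a ^ (-α) * (I / Real.exp (-(a ^ α + h a)) * (α * a ^ (α-1) + h' a))
          * Real.exp (-(a ^ α + h a)) := by field_simp
  have hcA : 0 ≤ C * a ^ (-α) := by positivity
  have hfinal : |Q| ≤ 2 * C * a ^ (-α) := by
    nlinarith [abs_nonneg Q, le_abs_self Q, hhalf]
  have hap : (0:ℝ) < a ^ (-α) := Real.rpow_pos_of_pos ha0 _
  rw [Real.norm_eq_abs, Real.norm_eq_abs, abs_of_pos hap]
  calc |Q| ≤ 2 * C * a ^ (-α) := hfinal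
    _ = 2 * C * a ^ (-α) := rfl
end

section
/- Let (z_n), (β_n), (ξ_n), (ζ_n) be sequences of nonnegative real numbers with ∑β_n<∞, ∑ξ_n<∞, and z_n ≤ z_{n-1}(1+β_{n-1}) + ξ_{n-1} - ζ_{n-1} for all n. Then lim_{n→∞} z_n exists and is finite, and ∑ζ_n < ∞. -/
open Filter

/-- Deterministic Robbins–Siegmund lemma. -/
theorem stmt4 (z β ξ ζ : ℕ → ℝ)
    (hz : ∀ n, 0 ≤ z n) (hβ : ∀ n, 0 ≤ β n) (hξ : ∀ n, 0 ≤ ξ n) (hζ : ∀ n, 0 ≤ ζ n)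
    (hβs : Summable β) (hξs : Summable ξ)
    (hrec : ∀ n, z (n + 1) ≤ z n * (1 + β n) + ξ n - ζ n) :
    (∃ L : ℝ, Tendsto z atTop (nhds L)) ∧ Summable ζ := by
  set P : ℕ → ℝ := fun n => ∏ k ∈ Finset.range n, (1 + β k) with hPdef
  have hPpos : ∀ n, 0 < P n := fun n =>
    Finset.prod_pos (fun i _ => by linarith [hβ i])
  have hPsucc : ∀ n, P (n + 1) = P n * (1 + β n) := fun n => Finset.prod_range_succ _ _
  have hPmono : Monotone P := monotone_nat_of_le_succ (fun n => by
    rw [hPsucc n]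
    nlinarith [hPpos n, hβ n])
  have hP0 : P 0 = 1 := Finset.prod_range_zero _
  have hP1 : ∀ n, 1 ≤ P n := fun n => hP0 ▸ hPmono (Nat.zero_le n)
  have hR : ∀ n, P n ≤ Real.exp (∑' k, β k) := by
    intro n
    calc P n ≤ ∏ k ∈ Finset.range n, Real.exp (β k) := by
          apply Finset.prod_le_prod (fun i _ => by linarith [hβ i])
          intro i _
          linarith [Real.add_one_le_exp (β i)]
      _ = Real.exp (∑ k ∈ Finset.range n, β k) := by
          rw [Real.exp_sum]
      _ ≤ Real.exp (∑' k, β k) := by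
          apply Real.exp_le_exp.mpr
          exact Summable.sum_le_tsum _ (fun i _ => hβ i) hβs
  set u : ℕ → ℝ := fun n => z n / P n with hudef
  set ξ' : ℕ → ℝ := fun n => ξ n / P (n + 1) with hξ'def
  set ζ' : ℕ → ℝ := fun n => ζ n / P (n + 1) with hζ'def
  have hξ'nn : ∀ n, 0 ≤ ξ' n := fun n => div_nonneg (hξ n) (hPpos _).le
  have hζ'nn : ∀ n, 0 ≤ ζ' n := fun n => div_nonneg (hζ n) (hPpos _).le
  have hunn : ∀ n, 0 ≤ u n := fun n => div_nonneg (hz n) (hPpos _).le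
  have key : ∀ n, u (n + 1) + ζ' n ≤ u n + ξ' n := by
    intro n
    have h1 : u n + ξ' n = (z n * (1 + β n) + ξ n) / P (n + 1) := by
      rw [hudef, hξ'def]
      simp only
      rw [hPsucc n, add_div]
      congr 1
      rw [mul_div_mul_right _ _ (by linarith [hβ n] : (1 : ℝ) + β n ≠ 0)]
    have h2 : u (n + 1) + ζ' n = (z (n + 1) + ζ n) / P (n + 1) := by
      rw [hudef, hζ'def, add_div]
    rw [h1, h2, div_le_div_iff_of_pos_right (hPpos (n + 1))]
    linarith [hrec n]
  have hξ's : Summable ξ' := by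
    apply Summable.of_nonneg_of_le hξ'nn _ hξs
    intro n
    rw [hξ'def]
    simp only
    rw [div_le_iff₀ (hPpos _)]
    nlinarith [hP1 (n + 1), hξ n]
  set v : ℕ → ℝ := fun n => u n + (∑ k ∈ Finset.range n, ζ' k) - ∑ k ∈ Finset.range n, ξ' k
    with hvdef
  have hvanti : Antitone v := by
    apply antitone_nat_of_succ_le
    intro n
    simp only [hvdef, Finset.sum_range_succ]
    linarith [key n]
  have hvbd : ∀ n, -(∑' k, ξ' k) ≤ v n := by
    intro n
    have h1 : ∑ k ∈ Finset.range n, ξ' k ≤ ∑' k, ξ' k :=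
      Summable.sum_le_tsum _ (fun i _ => hξ'nn i) hξ's
    have h2 : 0 ≤ ∑ k ∈ Finset.range n, ζ' k := Finset.sum_nonneg (fun i _ => hζ'nn i)
    simp only [hvdef]
    linarith [hunn n]
  have hζ's : Summable ζ' := by
    apply summable_of_sum_range_le hζ'nn (c := v 0 + ∑' k, ξ' k)
    intro n
    have h1 : ∑ k ∈ Finset.range n, ξ' k ≤ ∑' k, ξ' k :=
      Summable.sum_le_tsum _ (fun i _ => hξ'nn i) hξ's
    have h2 : v n ≤ v 0 := hvanti (Nat.zero_le n)
    have h3 : ∑ k ∈ Finset.range n, ζ' k = v n - u n + ∑ k ∈ Finset.range n, ξ' k := by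
      simp only [hvdef]; ring
    linarith [hunn n]
  have hζs : Summable ζ := by
    apply Summable.of_nonneg_of_le hζ ?_ (hζ's.mul_right (Real.exp (∑' k, β k)))
    · intro n
      have h : ζ n = ζ' n * P (n + 1) := by
        rw [hζ'def]
        exact (div_mul_cancel₀ _ (hPpos (n + 1)).ne').symm
      rw [h]
      exact mul_le_mul_of_nonneg_left (hR (n + 1)) (hζ'nn n)
  refine ⟨?_, hζs⟩
  -- v converges
  have hvlim : Tendsto v atTop (nhds (⨅ n, v n)) := by
    apply tendsto_atTop_ciInf hvanti
    exact ⟨-(∑' k, ξ' k), fun x ⟨n, hn⟩ => hn ▸ hvbd n⟩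
  have hξlim : Tendsto (fun n => ∑ k ∈ Finset.range n, ξ' k) atTop (nhds (∑' k, ξ' k)) :=
    hξ's.hasSum.tendsto_sum_nat
  have hζlim : Tendsto (fun n => ∑ k ∈ Finset.range n, ζ' k) atTop (nhds (∑' k, ζ' k)) :=
    hζ's.hasSum.tendsto_sum_nat
  have hulim : Tendsto u atTop (nhds ((⨅ n, v n) + (∑' k, ξ' k) - ∑' k, ζ' k)) := by
    have : u = fun n => v n + (∑ k ∈ Finset.range n, ξ' k) - ∑ k ∈ Finset.range n, ζ' k := by
      funext n
      simp only [hvdef]; ring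
    rw [this]
    exact (hvlim.add hξlim).sub hζlim
  have hPlim : Tendsto P atTop (nhds (⨆ n, P n)) := by
    apply tendsto_atTop_ciSup hPmono
    exact ⟨Real.exp (∑' k, β k), fun x ⟨n, hn⟩ => hn ▸ hR n⟩
  refine ⟨((⨅ n, v n) + (∑' k, ξ' k) - ∑' k, ζ' k) * (⨆ n, P n), ?_⟩
  have : z = fun n => u n * P n := by
    funext n
    rw [hudef]
    exact (div_mul_cancel₀ _ (hPpos n).ne').symm
  rw [this]
  exact hulim.mul hPlim
end

section
/- Let G(a) = a^α + (α-1)·log a + O(1) as a→∞, with α > 1, G continuous and strictly increasing to ∞. Then G^{-1}(a) - a^{1/α} → 0 as a→∞. -/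
open Real Filter

private lemma aux_bern (α : ℝ) (hα : 1 ≤ α) {s ε : ℝ} (hs : 0 < s) (hε : 0 ≤ ε) :
    s ^ α + α * ε * s ^ (α - 1) ≤ (s + ε) ^ α := by
  have hz : (0:ℝ) ≤ ε / s := by positivity
  have h := one_add_mul_self_le_rpow_one_add (by linarith : (-1:ℝ) ≤ ε / s) hα
  have h2 : (s + ε) ^ α = s ^ α * (1 + ε / s) ^ α := by
    rw [← Real.mul_rpow hs.le (by positivity)]
    congr 1
    field_simp
  rw [h2]
  calc s ^ α + α * ε * s ^ (α - 1) = s ^ α * (1 + α * (ε / s)) := by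
        rw [mul_add, mul_one]
        congr 1
        rw [Real.rpow_sub hs, Real.rpow_one]
        field_simp
    _ ≤ s ^ α * (1 + ε / s) ^ α :=
        mul_le_mul_of_nonneg_left h (Real.rpow_nonneg hs.le α)

private lemma aux_log (β c C : ℝ) (hβ : 0 < β) (hc : 0 < c) :
    ∀ᶠ x in atTop, β * Real.log x + C ≤ c * x ^ β := by
  have h := (isLittleO_log_rpow_atTop hβ).const_mul_left β
  have h2 := h.def (half_pos hc)
  have h3 : Tendsto (fun x : ℝ => x ^ β) atTop atTop := tendsto_rpow_atTop hβ
  filter_upwards [h2, h3.eventually_ge_atTop (2 * C / c), eventually_ge_atTop (1:ℝ)]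
    with x hx hx2 hx1
  have hxb : (0:ℝ) ≤ x ^ β := Real.rpow_nonneg (by linarith) β
  rw [Real.norm_eq_abs, Real.norm_eq_abs, abs_of_nonneg hxb] at hx
  have h4 : β * Real.log x ≤ c / 2 * x ^ β := (le_abs_self _).trans hx
  have h5 : C ≤ c / 2 * x ^ β := by
    rw [div_le_iff₀ hc] at hx2
    nlinarith
  linarith

/-- If `G` is a continuous strictly increasing function tending to `∞`
with `G a = a^α + (α-1) log a + O(1)` (`α > 1`), and `Ginv` is its inverse (for large
arguments), then `Ginv a - a^(1/α) → 0` as `a → ∞`. -/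
theorem stmt8 (α : ℝ) (hα : 1 < α) (G Ginv : ℝ → ℝ)
    (hGcont : Continuous G) (hGmono : StrictMono G)
    (hGtop : Tendsto G atTop atTop)
    (hO : ∃ C : ℝ, ∀ᶠ a in atTop, |G a - (a ^ α + (α - 1) * Real.log a)| ≤ C)
    (hinv : ∀ᶠ a in atTop, G (Ginv a) = a) :
    Tendsto (fun a => Ginv a - a ^ (1 / α)) atTop (nhds 0) := by
  obtain ⟨C, hC⟩ := hO
  have hα0 : (0:ℝ) < α := lt_trans one_pos hα
  have hα1 : (0:ℝ) < α - 1 := by linarith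
  have h1α : (0:ℝ) < 1 / α := by positivity
  rw [NormedAddCommGroup.tendsto_nhds_zero]
  intro ε hε
  set δ := ε / 2 with hδdef
  have hδ : 0 < δ := half_pos hε
  have ht : Tendsto (fun a : ℝ => a ^ (1 / α)) atTop atTop := tendsto_rpow_atTop h1α
  have htpow : Tendsto (fun a : ℝ => (a ^ (1 / α)) ^ (α - 1)) atTop atTop :=
    (tendsto_rpow_atTop hα1).comp ht
  have htadd : Tendsto (fun a : ℝ => a ^ (1 / α) + δ) atTop atTop :=
    tendsto_atTop_add_const_right _ _ ht
  have htsub : Tendsto (fun a : ℝ => a ^ (1 / α) - δ) atTop atTop :=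
    tendsto_atTop_add_const_right _ _ ht
  -- Ginv tends to atTop
  have hGinv : Tendsto Ginv atTop atTop := by
    rw [tendsto_atTop]
    intro M
    filter_upwards [hinv, eventually_ge_atTop (G M + 1)] with a ha hA
    by_contra h
    push_neg at h
    have := hGmono h
    rw [ha] at this
    linarith
  filter_upwards [hinv, ht.eventually_ge_atTop (1 + δ),
    htadd.eventually (hC), htsub.eventually (hC),
    htpow.eventually_ge_atTop (C / (α * δ)),
    htsub.eventually (aux_log (α - 1) (α * δ) C hα1 (by positivity)),
    eventually_ge_atTop (1:ℝ)] with a ha ht1 hCp hCm hpow hlog ha1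
  set t := a ^ (1 / α) with htdef
  have hta : t ^ α = a := by
    rw [htdef, one_div, Real.rpow_inv_rpow (by linarith) hα0.ne']
  have htpos : 0 < t := by linarith
  have hspos : (0:ℝ) < t - δ := by linarith
  -- upper bound : Ginv a ≤ t + δ
  have hup : Ginv a ≤ t + δ := by
    have hb := aux_bern α hα.le htpos hδ.le
    rw [hta] at hb
    have hlogy : 0 ≤ Real.log (t + δ) := Real.log_nonneg (by linarith)
    have hC1 : (t + δ) ^ α + (α - 1) * Real.log (t + δ) - C ≤ G (t + δ) := by
      have := abs_le.mp hCp
      linarith [this.1]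
    have hpow' : C ≤ α * δ * t ^ (α - 1) := by
      rw [div_le_iff₀ (by positivity)] at hpow
      nlinarith
    have key : a ≤ G (t + δ) := by nlinarith
    have : G (Ginv a) ≤ G (t + δ) := by rw [ha]; exact key
    exact hGmono.le_iff_le.mp this
  -- lower bound : t - δ ≤ Ginv a
  have hlo : t - δ ≤ Ginv a := by
    have hb := aux_bern α hα.le hspos hδ.le
    have hb' : (t - δ) ^ α + α * δ * (t - δ) ^ (α - 1) ≤ a := by
      rw [← hta]
      convert hb using 2
      ring
    have hC2 : G (t - δ) ≤ (t - δ) ^ α + (α - 1) * Real.log (t - δ) + C := by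
      have := abs_le.mp hCm
      linarith [this.2]
    have key : G (t - δ) ≤ a := by linarith
    have : G (t - δ) ≤ G (Ginv a) := by rw [ha]; exact key
    exact hGmono.le_iff_le.mp this
  have : |Ginv a - t| ≤ δ := abs_le.mpr ⟨by linarith, by linarith⟩
  calc ‖Ginv a - t‖ = |Ginv a - t| := rfl
    _ ≤ δ := this
    _ < ε := by linarith
end

section
/- Let (a_i) be a sequence with a_i → ∞ and a_i - a_{i-1} → c > 0. Then for each fixed j ≥ 1 and d > 0, lim_{k→∞} ∑_{i=1}^{k-j-1} e^{-d(a_{k-j} - a_i)} = 1/(e^{dc}-1). -/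
open Real Filter

lemma aux_ptlim (a : ℕ → ℝ) (c : ℝ)
    (hdiff : Tendsto (fun i => a (i + 1) - a i) atTop (nhds c)) (n : ℕ) :
    Tendsto (fun m => a m - a (m - n)) atTop (nhds (n * c)) := by
  have h1 : Tendsto (fun m => ∑ t ∈ Finset.range n, (a (m + t + 1) - a (m + t)))
      atTop (nhds (n * c)) := by
    have : (n : ℝ) * c = ∑ t ∈ Finset.range n, c := by simp
    rw [this]
    apply tendsto_finset_sum
    intro t _
    exact hdiff.comp (tendsto_add_atTop_nat t)
  have h2 : Tendsto (fun m : ℕ => m - n) atTop atTop := tendsto_sub_atTop_nat n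
  have := h1.comp h2
  apply this.congr'
  filter_upwards [eventually_ge_atTop n] with m hm
  simp only [Function.comp]
  have key : ∑ t ∈ Finset.range n, (a (m - n + t + 1) - a (m - n + t))
      = a (m - n + n) - a (m - n + 0) := by
    have := Finset.sum_range_sub (fun t => a (m - n + t)) n
    simpa [add_assoc] using this
  rw [key, Nat.sub_add_cancel hm, add_zero]

lemma aux_tele (a : ℕ → ℝ) (c : ℝ) (N : ℕ) (hN : ∀ i, N ≤ i → c / 2 ≤ a (i + 1) - a i)
    (p : ℕ) (hp : N ≤ p) : ∀ t : ℕ, (c / 2) * t ≤ a (p + t) - a p := by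
  intro t
  induction t with
  | zero => simp
  | succ t ih =>
      have h := hN (p + t) (le_trans hp (Nat.le_add_right p t))
      push_cast
      have : a (p + (t+1)) = a ((p + t) + 1) := by ring_nf
      rw [this]
      linarith

noncomputable def auxF (a : ℕ → ℝ) (d : ℝ) (m n : ℕ) : ℝ :=
  if n ∈ Finset.Icc 1 (m - 1) then Real.exp (-d * (a m - a (m - n))) else 0

noncomputable def auxG (d c : ℝ) (n : ℕ) : ℝ :=
  if n = 0 then 0 else Real.exp (-(d * c)) ^ n

lemma aux_main (a : ℕ → ℝ) (c d : ℝ) (hc : 0 < c) (hd : 0 < d)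
    (hdiff : Tendsto (fun i => a (i + 1) - a i) atTop (nhds c)) :
    Tendsto (fun m => ∑ i ∈ Finset.Icc 1 (m - 1), Real.exp (-d * (a m - a i)))
      atTop (nhds (1 / (Real.exp (d * c) - 1))) := by
  obtain ⟨N, hN⟩ : ∃ N, ∀ i, N ≤ i → c / 2 ≤ a (i + 1) - a i := by
    have := hdiff.eventually (eventually_ge_nhds (by linarith : c / 2 < c))
    exact eventually_atTop.mp this
  obtain ⟨B, hB0, hB⟩ : ∃ B : ℝ, 0 ≤ B ∧ ∀ i ≤ N, a i - a N ≤ B := by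
    refine ⟨(Finset.range (N + 1)).sup' (by simp) (fun i => a i - a N), ?_, ?_⟩
    · have := Finset.le_sup' (f := fun i => a i - a N)
        (Finset.mem_range.mpr (Nat.lt_succ_self N))
      exact le_trans (by simp) this
    · intro i hi
      exact Finset.le_sup' (fun i => a i - a N) (Finset.mem_range.mpr (by omega))
  obtain ⟨K, hK0, hKval⟩ : ∃ K : ℝ, 0 ≤ K ∧ K = (c / 2) * N + B :=
    ⟨_, by positivity, rfl⟩
  have key : ∀ m n : ℕ, N ≤ m → 1 ≤ n → n ≤ m - 1 →
      (c / 2) * n - K ≤ a m - a (m - n) := by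
    intro m n hm hn1 hnm
    by_cases h : N ≤ m - n
    · have h1 := aux_tele a c N hN (m - n) h n
      have hmn : m - n + n = m := by omega
      rw [hmn] at h1
      linarith
    · push_neg at h
      have h1 : (c / 2) * (↑(m - N) : ℝ) ≤ a m - a N := by
        have := aux_tele a c N hN N le_rfl (m - N)
        rwa [Nat.add_sub_cancel' hm] at this
      have h2 : a (m - n) - a N ≤ B := hB (m - n) (by omega)
      rw [Nat.cast_sub hm, mul_sub] at h1
      have hmn : (n : ℝ) + 1 ≤ m := by exact_mod_cast (show n + 1 ≤ m by omega)
      have h3 : (c / 2) * (n : ℝ) ≤ (c / 2) * (m : ℝ) :=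
        mul_le_mul_of_nonneg_left (by linarith) (by linarith)
      rw [hKval]
      linarith
  set r : ℝ := Real.exp (-(d * c)) with hrdef
  have hr0 : 0 < r := Real.exp_pos _
  have hr1 : r < 1 := Real.exp_lt_one_iff.mpr (by nlinarith)
  set s : ℝ := Real.exp (-(d * c / 2)) with hsdef
  have hs0 : 0 < s := Real.exp_pos _
  have hs1 : s < 1 := Real.exp_lt_one_iff.mpr (by nlinarith)
  have hsum : Summable (fun n : ℕ => Real.exp (d * K) * s ^ n) :=
    (summable_geometric_of_lt_one hs0.le hs1).mul_left _
  have hab : ∀ n : ℕ, Tendsto (auxF a d · n) atTop (nhds (auxG d c n)) := by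
    intro n
    rcases Nat.eq_zero_or_pos n with rfl | hn
    · have h0 : (auxF a d · 0) = fun _ => (0:ℝ) := by
        funext m; simp [auxF]
      rw [h0]
      simpa [auxG] using tendsto_const_nhds (α := ℝ) (f := atTop (α := ℕ))
    · have hlim : Tendsto (fun m => Real.exp (-d * (a m - a (m - n)))) atTop
          (nhds (Real.exp (-d * (n * c)))) :=
        (Real.continuous_exp.tendsto _).comp ((aux_ptlim a c hdiff n).const_mul (-d))
      have hg : auxG d c n = Real.exp (-d * (n * c)) := by
        rw [auxG, if_neg (by omega), ← Real.exp_nat_mul]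
        ring_nf
      rw [hg]
      apply hlim.congr'
      filter_upwards [eventually_ge_atTop (n + 1)] with m hm
      rw [auxF, if_pos (Finset.mem_Icc.mpr ⟨hn, by omega⟩)]
  have h_bound : ∀ᶠ m in atTop, ∀ n, ‖auxF a d m n‖ ≤ Real.exp (d * K) * s ^ n := by
    filter_upwards [eventually_ge_atTop N] with m hm n
    by_cases h : n ∈ Finset.Icc 1 (m - 1)
    · rw [auxF, if_pos h, Real.norm_eq_abs, abs_of_pos (Real.exp_pos _)]
      obtain ⟨hn1, hnm⟩ := Finset.mem_Icc.mp h
      have hkey := key m n hm hn1 hnm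
      have hle : -d * (a m - a (m - n)) ≤ d * K + (n : ℝ) * (-(d * c / 2)) := by
        nlinarith
      calc Real.exp (-d * (a m - a (m - n)))
          ≤ Real.exp (d * K + (n : ℝ) * (-(d * c / 2))) := Real.exp_le_exp.mpr hle
        _ = Real.exp (d * K) * s ^ n := by
            rw [Real.exp_add, Real.exp_nat_mul]
    · rw [auxF, if_neg h, norm_zero]
      positivity
  have hDC := tendsto_tsum_of_dominated_convergence hsum hab h_bound
  have hfin : ∀ m, ∑' n, auxF a d m n
      = ∑ i ∈ Finset.Icc 1 (m - 1), Real.exp (-d * (a m - a i)) := by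
    intro m
    rw [tsum_eq_sum (s := Finset.Icc 1 (m - 1))
      (fun n hn => by rw [auxF, if_neg hn])]
    rw [Finset.sum_congr rfl (fun n hn => by rw [auxF, if_pos hn])]
    apply Finset.sum_nbij' (fun n => m - n) (fun i => m - i)
    · intro n hn; obtain ⟨h1, h2⟩ := Finset.mem_Icc.mp hn
      exact Finset.mem_Icc.mpr ⟨by omega, by omega⟩
    · intro i hi; obtain ⟨h1, h2⟩ := Finset.mem_Icc.mp hi
      exact Finset.mem_Icc.mpr ⟨by omega, by omega⟩
    · intro n hn; obtain ⟨h1, h2⟩ := Finset.mem_Icc.mp hn; omega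
    · intro i hi; obtain ⟨h1, h2⟩ := Finset.mem_Icc.mp hi; omega
    · intro n hn; rfl
  have hgsum : Summable (auxG d c) := by
    apply Summable.of_norm_bounded (summable_geometric_of_lt_one hr0.le hr1)
    intro n
    rw [auxG]
    by_cases h : n = 0
    · simp [h]
    · rw [if_neg h, Real.norm_eq_abs, abs_of_pos (pow_pos hr0 n)]
  have hgval : ∑' n, auxG d c n = 1 / (Real.exp (d * c) - 1) := by
    rw [Summable.tsum_eq_zero_add hgsum]
    have hg0 : auxG d c 0 = 0 := by simp [auxG]
    have hgs : ∀ n : ℕ, auxG d c (n + 1) = r * r ^ n := by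
      intro n; rw [auxG, if_neg (by omega), pow_succ]; ring
    simp_rw [hg0, hgs, zero_add]
    rw [tsum_mul_left, tsum_geometric_of_lt_one hr0.le hr1]
    have hE : Real.exp (d * c) = r⁻¹ := by
      rw [hrdef, ← Real.exp_neg, neg_neg]
    rw [hE]
    have h1r : (1:ℝ) - r ≠ 0 := by linarith
    have hr0' : r ≠ 0 := ne_of_gt hr0
    field_simp
  rw [← hgval]
  exact hDC.congr hfin

/-- If `a i → ∞` and `a (i+1) - a i → c > 0`, then for fixed `j ≥ 1`
and `d > 0`, `∑_{i=1}^{k-j-1} e^{-d (a (k-j) - a i)} → 1/(e^{dc} - 1)` as `k → ∞`. -/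
theorem stmt16 (a : ℕ → ℝ) (c d : ℝ) (hc : 0 < c) (hd : 0 < d)
    (hatop : Tendsto a atTop atTop)
    (hdiff : Tendsto (fun i => a (i + 1) - a i) atTop (nhds c))
    (j : ℕ) (hj : 1 ≤ j) :
    Tendsto (fun k =>
        ∑ i ∈ Finset.Icc 1 (k - j - 1), Real.exp (-d * (a (k - j) - a i)))
      atTop (nhds (1 / (Real.exp (d * c) - 1))) := by
  exact (aux_main a c d hc hd hdiff).comp (tendsto_sub_atTop_nat j)
end
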